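/- (Invariance subspace property of the EnKF iteration.) Let G : ℝ^d → ℝ^N be any map, let C ∈ ℝ^{N×N}, let J ≥ 2, and let y_n^{(j)} ∈ ℝ^N for n ≥ 1, 1 ≤ j ≤ J be arbitrary data vectors. Given initial particles ξ_0^{(1)},…,ξ_0^{(J)} ∈ ℝ^d, define recursively: ω_n^{(j)} = G(ξ_n^{(j)}), ξ̄_n = (1/J)Σ_j ξ_n^{(j)}, ω̄_n = (1/J)Σ_j ω_n^{(j)}, Γ_n^{ξω} = (1/(J−1))Σ_j (ξ_n^{(j)} − ξ̄_n)(ω_n^{(j)} − ω̄_n)ᵀ, Γ_n^{ωω} = (1/(J−1))Σ_j (ω_n^{(j)} − ω̄_n)(ω_n^{(j)} − ω̄_n)ᵀ, and ξ_{n+1}^{(j)} = ξ_n^{(j)} + Γ_n^{ξω}(Γ_n^{ωω} + C)^{-1}(y_{n+1}^{(j)} − ω_n^{(j)}), where M^{-1} denotes the matrix inverse (any fixed total extension of the inverse, e.g. Mathlib's). Then for every n ≥ 0 and every j, the particle ξ_n^{(j)} lies in the linear span of {ξ_0^{(1)},…,ξ_0^{(J)}}; in particular the EnKF estimator ξ_n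 = (1/J)Σ_j ξ_n^{(j)} lies in this span. -/

import Mathlib

open Matrix BigOperators

/-
The EnKF correction of a particle is `Γ^{ξω} v` for some vector `v`, and `Γ^{ξω}` is a sum of
outer products `(ξ⁽ⁱ⁾ - ξ̄) bᵢᵀ`, which maps every `v` to a combination of the centred particles
`ξ⁽ⁱ⁾ - ξ̄`. Whatever `G`, `C` and the data are, each step therefore stays in any subspace
containing the current ensemble, and induction on `n` keeps the whole iteration in the span of
the initial ensemble.
-/

section EnsembleSpan

variable {R ι m n : Type*} [CommRing R] [Fintype ι] [Fintype n]

theorem Matrix.sum_vecMulVec_mulVec_mem {S : Submodule R (m → R)} {a : ι → m → R}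
    (ha : ∀ i, a i ∈ S) (b : ι → n → R) (v : n → R) :
    (∑ i, vecMulVec (a i) (b i)) *ᵥ v ∈ S := by
  rw [sum_mulVec]
  refine S.sum_mem fun i _ => ?_
  rw [vecMulVec_mulVec, op_smul_eq_smul]
  exact S.smul_mem _ (ha i)

theorem Submodule.sub_smul_sum_mem {S : Submodule R (m → R)} {x : ι → m → R}
    (hx : ∀ i, x i ∈ S) (c : R) (j : ι) : x j - c • ∑ l, x l ∈ S :=
  S.sub_mem (hx j) (S.smul_mem c (S.sum_mem fun l _ => hx l))

theorem enkf_step_mem {S : Submodule R (m → R)} {x : ι → m → R} (hx : ∀ i, x i ∈ S)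
    (c c' : R) (b : ι → n → R) (v : n → R) (j : ι) :
    x j + (c • ∑ i, vecMulVec (x i - c' • ∑ l, x l) (b i)) *ᵥ v ∈ S := by
  rw [smul_mulVec]
  exact S.add_mem (hx j)
    (S.smul_mem c (sum_vecMulVec_mulVec_mem (Submodule.sub_smul_sum_mem hx c') b v))

end EnsembleSpan

theorem enkf_invariance_subspace_property_general
    (d N J : ℕ)
    (G : (Fin d → ℝ) → (Fin N → ℝ)) (C : Matrix (Fin N) (Fin N) ℝ)
    (y : ℕ → Fin J → (Fin N → ℝ))
    (ξ : ℕ → Fin J → (Fin d → ℝ))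
    (hrec : ∀ n : ℕ, ∀ j : Fin J,
      ξ (n + 1) j = ξ n j +
        (((J : ℝ) - 1)⁻¹ •
            ∑ i, Matrix.vecMulVec (ξ n i - (J : ℝ)⁻¹ • ∑ l, ξ n l)
              (G (ξ n i) - (J : ℝ)⁻¹ • ∑ l, G (ξ n l))).mulVec
          (((((J : ℝ) - 1)⁻¹ •
              ∑ i, Matrix.vecMulVec (G (ξ n i) - (J : ℝ)⁻¹ • ∑ l, G (ξ n l))
                (G (ξ n i) - (J : ℝ)⁻¹ • ∑ l, G (ξ n l))) + C)⁻¹.mulVec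
            (y (n + 1) j - G (ξ n j)))) :
    (∀ n : ℕ, ∀ j : Fin J, ξ n j ∈ Submodule.span ℝ (Set.range (ξ 0))) ∧
    (∀ n : ℕ, (J : ℝ)⁻¹ • ∑ j, ξ n j ∈ Submodule.span ℝ (Set.range (ξ 0))) := by
  set S := Submodule.span ℝ (Set.range (ξ 0))
  have particles_mem : ∀ n j, ξ n j ∈ S := by
    intro n
    induction n with
    | zero => exact fun j => Submodule.subset_span ⟨j, rfl⟩
    | succ n ih => exact fun j => hrec n j ▸ enkf_step_mem ih _ _ _ _ j
  exact ⟨particles_mem, fun n => S.smul_mem _ (S.sum_mem fun j _ => particles_mem n j)⟩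

/-- Invariance subspace property of the EnKF iteration: every particle generated by the
ensemble Kalman filter update
`ξ_{n+1}⁽ʲ⁾ = ξ_n⁽ʲ⁾ + Γ_n^{ξω}(Γ_n^{ωω} + C)⁻¹(y_{n+1}⁽ʲ⁾ − G(ξ_n⁽ʲ⁾))`
lies in the linear span of the initial ensemble; in particular so does the EnKF estimator
`(1/J) Σⱼ ξ_n⁽ʲ⁾`. -/
theorem enkf_invariance_subspace_property
    (d N J : ℕ) (hJ : 2 ≤ J)
    (G : (Fin d → ℝ) → (Fin N → ℝ)) (C : Matrix (Fin N) (Fin N) ℝ)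
    (y : ℕ → Fin J → (Fin N → ℝ))
    (ξ : ℕ → Fin J → (Fin d → ℝ))
    (hrec : ∀ n : ℕ, ∀ j : Fin J,
      ξ (n + 1) j = ξ n j +
        (((J : ℝ) - 1)⁻¹ •
            ∑ i, Matrix.vecMulVec (ξ n i - (J : ℝ)⁻¹ • ∑ l, ξ n l)
              (G (ξ n i) - (J : ℝ)⁻¹ • ∑ l, G (ξ n l))).mulVec
          (((((J : ℝ) - 1)⁻¹ •
              ∑ i, Matrix.vecMulVec (G (ξ n i) - (J : ℝ)⁻¹ • ∑ l, G (ξ n l))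
                (G (ξ n i) - (J : ℝ)⁻¹ • ∑ l, G (ξ n l))) + C)⁻¹.mulVec
            (y (n + 1) j - G (ξ n j)))) :
    (∀ n : ℕ, ∀ j : Fin J, ξ n j ∈ Submodule.span ℝ (Set.range (ξ 0))) ∧
    (∀ n : ℕ, (J : ℝ)⁻¹ • ∑ j, ξ n j ∈ Submodule.span ℝ (Set.range (ξ 0))) :=
  enkf_invariance_subspace_property_general d N J G C y ξ hrec
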